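/- Let [σ,τ] be an interval in the permutation pattern poset and let α be an indecomposable permutation such that α ⊕ σ is not ≤ τ. Then the map π ↦ α ⊕ π is an order isomorphism from [σ,τ] onto [α⊕σ, α⊕τ]. -/

import Mathlib

open scoped Classical

/-- The set of all (finite) permutations, as patterns: a permutation of length `n`
together with its length. -/
abbrev PermPt := Σ n : ℕ, Equiv.Perm (Fin n)

/-- Pattern containment order: `σ` occurs in `τ` if there is a strictly monotone
choice of positions on which `τ` is order-isomorphic to `σ`. -/
def ple (σ τ : PermPt) : Prop :=
  ∃ f : Fin σ.1 → Fin τ.1, StrictMono f ∧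
    ∀ a b : Fin σ.1, σ.2 a ≤ σ.2 b ↔ τ.2 (f a) ≤ τ.2 (f b)

/-- Strict pattern containment. -/
def plt (σ τ : PermPt) : Prop := ple σ τ ∧ ¬ ple τ σ

/-- Direct sum of permutations. -/
def pds {m n : ℕ} (α : Equiv.Perm (Fin m)) (β : Equiv.Perm (Fin n)) :
    Equiv.Perm (Fin (m + n)) :=
  finSumFinEquiv.symm.trans ((Equiv.sumCongr α β).trans finSumFinEquiv)

/-- Skew sum of permutations. -/
def pss {m n : ℕ} (α : Equiv.Perm (Fin m)) (β : Equiv.Perm (Fin n)) :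
    Equiv.Perm (Fin (m + n)) :=
  finSumFinEquiv.symm.trans
    (((Equiv.sumCongr α β).trans (Equiv.sumComm (Fin m) (Fin n))).trans
      (finSumFinEquiv.trans (finCongr (Nat.add_comm n m))))

/-- Direct sum, as an operation on `PermPt`. -/
def pdsP (a b : PermPt) : PermPt := ⟨a.1 + b.1, pds a.2 b.2⟩

/-- Skew sum, as an operation on `PermPt`. -/
def pssP (a b : PermPt) : PermPt := ⟨a.1 + b.1, pss a.2 b.2⟩

/-- The empty permutation. -/
def pempty : PermPt := ⟨0, 1⟩

/-- The permutation `1` of length one. -/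
def pone : PermPt := ⟨1, 1⟩

/-- A permutation is decomposable if it is the direct sum of two nonempty
permutations, i.e. some proper nonempty initial segment of positions is mapped
to the corresponding initial segment of values. -/
def Decomp {n : ℕ} (σ : Equiv.Perm (Fin n)) : Prop :=
  ∃ m : ℕ, 0 < m ∧ m < n ∧ ∀ i : Fin n, (i : ℕ) < m → (σ i : ℕ) < m

/-- Disconnectedness of a set of permutations under pattern containment:
it splits into two nonempty parts with no comparabilities between them. -/
def Disconn (S : Set PermPt) : Prop :=
  ∃ A B : Set PermPt, A ∪ B = S ∧ A.Nonempty ∧ B.Nonempty ∧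
    ∀ x ∈ A, ∀ y ∈ B, ¬ ple x y ∧ ¬ ple y x

/-!
An occurrence of `ρ` in `α ⊕ τ` sends an initial segment of the positions of `ρ` into the
`α`-block and the rest into the `τ`-block; since every value of the `α`-block lies below every
value of the `τ`-block, this splits `ρ = β ⊕ γ` with `β ≤ α` and `γ ≤ τ`. Applied to an
occurrence of `α ⊕ π` in `β ⊕ y` with `β ≤ α`, indecomposability of `α` leaves only two ways
to split: either `α` lands entirely in the `τ`-block, giving `α ⊕ π ≤ y`, or it is matched with
`β`, forcing `β = α` and `π ≤ y`. The hypothesis `α ⊕ σ ≰ τ` rules out the first alternative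
inside `[σ, τ]`, which gives both surjectivity and order reflection.
-/

open Equiv Finset

def IsOccurrence (σ τ : PermPt) (f : Fin σ.1 → Fin τ.1) : Prop :=
  StrictMono f ∧ ∀ a b, σ.2 a ≤ σ.2 b ↔ τ.2 (f a) ≤ τ.2 (f b)

theorem isOccurrence_id (σ : PermPt) : IsOccurrence σ σ id :=
  ⟨strictMono_id, fun _ _ => Iff.rfl⟩

namespace IsOccurrence

variable {σ τ υ : PermPt} {f : Fin σ.1 → Fin τ.1}

theorem comp {g : Fin τ.1 → Fin υ.1} (hg : IsOccurrence τ υ g) (hf : IsOccurrence σ τ f) :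
    IsOccurrence σ υ (g ∘ f) :=
  ⟨hg.1.comp hf.1, fun a b => (hf.2 a b).trans (hg.2 _ _)⟩

theorem lt_iff (hf : IsOccurrence σ τ f) (a b : Fin σ.1) :
    σ.2 a < σ.2 b ↔ τ.2 (f a) < τ.2 (f b) := by
  simp only [← not_le, hf.2]

theorem ple_of_forall_mem_range {e : Fin υ.1 → Fin τ.1} (he : IsOccurrence υ τ e)
    (hf : IsOccurrence σ τ f) (hfe : ∀ a, f a ∈ Set.range e) : ple σ υ := by
  choose f' hf' using hfe
  refine ⟨f', fun a b hab => ?_, fun a b => ?_⟩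
  · rw [← he.1.lt_iff_lt, hf', hf']
    exact hf.1 hab
  · rw [hf.2, he.2, hf', hf']

end IsOccurrence

theorem ple_refl (σ : PermPt) : ple σ σ := ⟨id, isOccurrence_id σ⟩

theorem ple_trans {σ τ υ : PermPt} (h₁ : ple σ τ) (h₂ : ple τ υ) : ple σ υ := by
  obtain ⟨f, hf⟩ := h₁
  obtain ⟨g, hg⟩ := h₂
  exact ⟨g ∘ f, IsOccurrence.comp hg hf⟩

theorem ple.fst_le {σ τ : PermPt} (h : ple σ τ) : σ.1 ≤ τ.1 := by
  obtain ⟨f, hf, -⟩ := h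
  simpa using Fin.le_of_injective f hf.injective

theorem perm_eq_of_le_iff {n : ℕ} {p q : Perm (Fin n)} (h : ∀ a b, p a ≤ p b ↔ q a ≤ q b) :
    p = q := by
  have hmono : StrictMono (q ∘ p.symm) := fun a b hab => by
    have := (h (p.symm b) (p.symm a)).not
    simp only [not_le, apply_symm_apply] at this
    exact this.1 hab
  refine Equiv.ext fun a => ?_
  simpa using (congrFun hmono.eq_id (p a)).symm

theorem ple_antisymm {σ τ : PermPt} (h₁ : ple σ τ) (h₂ : ple τ σ) : σ = τ := by
  obtain ⟨n, p⟩ := σ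
  obtain ⟨m, q⟩ := τ
  obtain rfl : n = m := le_antisymm h₁.fst_le h₂.fst_le
  obtain ⟨f, hf, hpq⟩ := h₁
  simp only [hf.eq_id, id] at hpq
  rw [perm_eq_of_le_iff hpq]

section DirectSum

variable {m n : ℕ}

@[simp]
theorem pds_castAdd (a : Perm (Fin m)) (b : Perm (Fin n)) (i : Fin m) :
    pds a b (Fin.castAdd n i) = Fin.castAdd n (a i) := by
  simp [pds]

@[simp]
theorem pds_natAdd (a : Perm (Fin m)) (b : Perm (Fin n)) (j : Fin n) :
    pds a b (Fin.natAdd m j) = Fin.natAdd m (b j) := by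
  simp [pds]

theorem pds_val_lt_iff (a : Perm (Fin m)) (b : Perm (Fin n)) (x : Fin (m + n)) :
    (pds a b x : ℕ) < m ↔ (x : ℕ) < m := by
  induction x using Fin.addCases <;> simp

theorem pds_inj {a a' : Perm (Fin m)} {b b' : Perm (Fin n)} :
    pds a b = pds a' b' ↔ a = a' ∧ b = b' := by
  refine ⟨fun h => ⟨?_, ?_⟩, fun ⟨ha, hb⟩ => ha ▸ hb ▸ rfl⟩ <;> ext i
  · simpa using congrArg Fin.val (DFunLike.congr_fun h (Fin.castAdd n i))
  · simpa using congrArg Fin.val (DFunLike.congr_fun h (Fin.natAdd m i))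

theorem exists_eq_pds {k l : ℕ} (p : Perm (Fin (k + l)))
    (hp : ∀ i : Fin k, (p (Fin.castAdd l i) : ℕ) < k) :
    ∃ (b : Perm (Fin k)) (c : Perm (Fin l)), p = pds b c := by
  set b : Fin k → Fin k := fun i => ⟨p (Fin.castAdd l i), hp i⟩
  have hb : Function.Bijective b := Finite.injective_iff_bijective.mp fun i j hij =>
    Fin.castAdd_injective k l (p.injective (Fin.ext (Fin.mk.inj_iff.mp hij)))
  have hsuffix : ∀ j : Fin l, k ≤ (p (Fin.natAdd k j) : ℕ) := fun j => by
    by_contra! hj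
    obtain ⟨i, hi⟩ := hb.2 ⟨_, hj⟩
    have := congrArg Fin.val (p.injective (Fin.ext (Fin.mk.inj_iff.mp hi)))
    simp only [Fin.val_castAdd, Fin.val_natAdd] at this
    omega
  set c : Fin l → Fin l := fun j => ⟨p (Fin.natAdd k j) - k, by have := hsuffix j; omega⟩
  have hc : Function.Bijective c := Finite.injective_iff_bijective.mp fun i j hij => by
    have := hsuffix i
    have := hsuffix j
    have := Fin.mk.inj_iff.mp hij
    exact Fin.natAdd_injective l k (p.injective (Fin.ext (by omega)))
  refine ⟨Equiv.ofBijective b hb, Equiv.ofBijective c hc, ?_⟩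
  ext x
  induction x using Fin.addCases with
  | left i => simp [b]
  | right j =>
    simp only [pds_natAdd, Fin.val_natAdd, ofBijective_apply, c]
    have := hsuffix j
    omega

end DirectSum

theorem isOccurrence_castAdd (β γ : PermPt) : IsOccurrence β (pdsP β γ) (Fin.castAdd γ.1) :=
  ⟨Fin.strictMono_castAdd _, fun a b => by
    show _ ↔ pds β.2 γ.2 _ ≤ pds β.2 γ.2 _
    rw [pds_castAdd, pds_castAdd, (Fin.strictMono_castAdd _).le_iff_le]⟩

theorem isOccurrence_natAdd (β γ : PermPt) : IsOccurrence γ (pdsP β γ) (Fin.natAdd β.1) :=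
  ⟨Fin.strictMono_natAdd _, fun a b => by
    show _ ↔ pds β.2 γ.2 _ ≤ pds β.2 γ.2 _
    rw [pds_natAdd, pds_natAdd, Fin.natAdd_le_natAdd_iff]⟩

theorem IsOccurrence.pdsP {a a' x y : PermPt} {f : Fin a.1 → Fin a'.1} {g : Fin x.1 → Fin y.1}
    (hf : IsOccurrence a a' f) (hg : IsOccurrence x y g) :
    IsOccurrence (pdsP a x) (pdsP a' y)
      (Fin.append (Fin.castAdd y.1 ∘ f) (Fin.natAdd a'.1 ∘ g)) := by
  obtain ⟨m, a⟩ := a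
  obtain ⟨m', a'⟩ := a'
  obtain ⟨n, x⟩ := x
  obtain ⟨n', y⟩ := y
  obtain ⟨hf, hfa⟩ := hf
  obtain ⟨hg, hgx⟩ := hg
  change IsOccurrence ⟨m + n, pds a x⟩ ⟨m' + n', pds a' y⟩
    (Fin.append (Fin.castAdd n' ∘ f) (Fin.natAdd m' ∘ g))
  refine ⟨fun u v huv => ?_, fun u v => ?_⟩
  · induction u using Fin.addCases <;> induction v using Fin.addCases <;> rename_i i j
    all_goals simp only [Fin.append_left, Fin.append_right, Function.comp_apply, Fin.lt_def,
      Fin.val_castAdd, Fin.val_natAdd] at huv ⊢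
    · exact hf (Fin.lt_def.2 huv)
    · omega
    · omega
    · have := hg (a := i) (b := j) (Fin.lt_def.2 (by omega))
      omega
  · dsimp only
    induction u using Fin.addCases <;> induction v using Fin.addCases <;> rename_i i j
    all_goals simp only [Fin.append_left, Fin.append_right, Function.comp_apply, pds_castAdd,
      pds_natAdd, Fin.le_def, Fin.val_castAdd, Fin.val_natAdd]
    · simpa only [Fin.le_def] using hfa i j
    · omega
    · omega
    · simpa only [Fin.le_def, add_le_add_iff_left] using hgx i j

theorem pdsP_ple_pdsP {a a' x y : PermPt} (ha : ple a a') (hxy : ple x y) :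
    ple (pdsP a x) (pdsP a' y) := by
  obtain ⟨f, hf⟩ := ha
  obtain ⟨g, hg⟩ := hxy
  exact ⟨_, IsOccurrence.pdsP hf hg⟩

theorem pdsP_ple_of_fst_eq_zero {β : PermPt} (γ : PermPt) (h : β.1 = 0) : ple (pdsP β γ) γ :=
  (isOccurrence_natAdd β γ).ple_of_forall_mem_range (isOccurrence_id _) fun x =>
    ⟨⟨x, by simpa [pdsP, h] using x.isLt⟩, Fin.ext (by simp [h])⟩

theorem Monotone.exists_val_lt_iff {N M : ℕ} {g : Fin N → Fin M} (hg : Monotone g) (m : ℕ) :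
    ∃ K ≤ N, ∀ i : Fin N, (i : ℕ) < K ↔ (g i : ℕ) < m := by
  refine ⟨#{j | (g j : ℕ) < m}, card_le_univ _ |>.trans (by simp),
    fun i => ⟨fun hi => ?_, fun hi => ?_⟩⟩
  · by_contra hgi
    have hsub : ({j | (g j : ℕ) < m} : Finset (Fin N)) ⊆ Iio i := fun j hj => by
      simp only [mem_filter, mem_univ, true_and] at hj
      exact mem_Iio.2 (lt_of_not_ge fun hij => hgi (lt_of_le_of_lt (hg hij) hj))
    have := card_le_card hsub
    simp only [Fin.card_Iio] at this
    omega
  · have hsub : Iic i ⊆ ({j | (g j : ℕ) < m} : Finset (Fin N)) := fun j hj =>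
      mem_filter.2 ⟨mem_univ _, lt_of_le_of_lt (hg (mem_Iic.1 hj)) hi⟩
    have := card_le_card hsub
    simp only [Fin.card_Iic] at this
    omega

theorem Equiv.Perm.val_lt_of_forall_lt {N K : ℕ} (p : Perm (Fin N))
    (hsep : ∀ i j : Fin N, (i : ℕ) < K → K ≤ (j : ℕ) → p i < p j) {i : Fin N}
    (hi : (i : ℕ) < K) : (p i : ℕ) < K := by
  have hpre : ∀ v : Fin (p i + 1), (p.symm (Fin.castLE (p i).isLt v) : ℕ) < K := fun v => by
    by_contra! hv
    have := Fin.lt_def.1 (hsep i _ hi hv)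
    simp only [apply_symm_apply, Fin.val_castLE] at this
    omega
  have := Fin.le_of_injective (fun v => (⟨_, hpre v⟩ : Fin K)) fun v w hvw =>
    Fin.castLE_injective _ (p.symm.injective (Fin.ext (Fin.mk.inj_iff.1 hvw)))
  omega

theorem exists_eq_pdsP_of_ple_pdsP {ρ α τ : PermPt} (h : ple ρ (pdsP α τ)) :
    ∃ β γ, ρ = pdsP β γ ∧ ple β α ∧ ple γ τ := by
  obtain ⟨N, p⟩ := ρ
  obtain ⟨g, hg⟩ : ∃ g : Fin N → Fin (α.1 + τ.1), IsOccurrence ⟨N, p⟩ (pdsP α τ) g := h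
  obtain ⟨K, hKN, hK⟩ := hg.1.monotone.exists_val_lt_iff α.1
  have hsep : ∀ i j : Fin N, (i : ℕ) < K → K ≤ (j : ℕ) → p i < p j := fun i j hi hj => by
    refine (hg.lt_iff i j).2 (Fin.lt_def.2 ?_)
    have hgi := (pds_val_lt_iff α.2 τ.2 (g i)).2 ((hK i).1 hi)
    have hgj := (pds_val_lt_iff α.2 τ.2 (g j)).not.2 (fun h => by have := (hK j).2 h; omega)
    exact lt_of_lt_of_le hgi (not_lt.1 hgj)
  obtain ⟨l, rfl⟩ : ∃ l, N = K + l := ⟨N - K, by omega⟩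
  obtain ⟨b, c, rfl⟩ := exists_eq_pds p fun i => p.val_lt_of_forall_lt hsep (by simp)
  refine ⟨⟨K, b⟩, ⟨l, c⟩, rfl, ?_, ?_⟩
  · exact (isOccurrence_castAdd α τ).ple_of_forall_mem_range
      (hg.comp (isOccurrence_castAdd ⟨K, b⟩ ⟨l, c⟩)) fun i =>
        ⟨⟨g (Fin.castAdd l i), (hK _).1 (by simp)⟩, rfl⟩
  · refine (isOccurrence_natAdd α τ).ple_of_forall_mem_range
      (hg.comp (isOccurrence_natAdd ⟨K, b⟩ ⟨l, c⟩)) fun j => ?_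
    have hj : α.1 ≤ g (Fin.natAdd K j) := not_lt.1 fun h => by have := (hK _).2 h; simp at this
    exact ⟨⟨g (Fin.natAdd K j) - α.1, by omega⟩, Fin.ext (Nat.add_sub_cancel' hj)⟩

theorem fst_eq_zero_or_eq_of_pdsP_eq {α x β γ : PermPt} (hα : ¬ Decomp α.2)
    (h : pdsP α x = pdsP β γ) (hβ : β.1 ≤ α.1) : β.1 = 0 ∨ β.1 = α.1 := by
  by_contra! hne
  have hpre : ∀ i : Fin (pdsP β γ).1, (i : ℕ) < β.1 → ((pdsP β γ).2 i : ℕ) < β.1 :=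
    fun i => (pds_val_lt_iff β.2 γ.2 i).2
  rw [← h] at hpre
  change ∀ i : Fin (α.1 + x.1), (i : ℕ) < β.1 → (pds α.2 x.2 i : ℕ) < β.1 at hpre
  refine hα ⟨β.1, Nat.pos_of_ne_zero hne.1, lt_of_le_of_ne hβ hne.2, fun i hi => ?_⟩
  simpa using hpre (Fin.castAdd x.1 i) hi

theorem pdsP_inj_of_fst_eq {α x β γ : PermPt} (h : pdsP α x = pdsP β γ) (hlen : α.1 = β.1) :
    α = β ∧ x = γ := by
  obtain ⟨m, a⟩ := α
  obtain ⟨k, b⟩ := β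
  obtain ⟨n, p⟩ := x
  obtain ⟨l, c⟩ := γ
  obtain rfl : m = k := hlen
  obtain ⟨hnl, hpc⟩ := Sigma.mk.inj_iff.1 h
  obtain rfl : n = l := by dsimp only at hnl; omega
  obtain ⟨rfl, rfl⟩ := pds_inj.1 (eq_of_heq hpc)
  exact ⟨rfl, rfl⟩

theorem eq_and_ple_or_pdsP_ple_of_pdsP_ple_pdsP {α β x y : PermPt} (hα : ¬ Decomp α.2)
    (hβα : ple β α) (h : ple (pdsP α x) (pdsP β y)) :
    (β = α ∧ ple x y) ∨ ple (pdsP α x) y := by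
  obtain ⟨β', γ', hsplit, hβ'β, hγ'y⟩ := exists_eq_pdsP_of_ple_pdsP h
  rcases fst_eq_zero_or_eq_of_pdsP_eq hα hsplit (ple_trans hβ'β hβα).fst_le with h0 | hlen
  · exact Or.inr (hsplit ▸ ple_trans (pdsP_ple_of_fst_eq_zero γ' h0) hγ'y)
  · obtain ⟨rfl, rfl⟩ := pdsP_inj_of_fst_eq hsplit hlen.symm
    exact Or.inl ⟨ple_antisymm hβα hβ'β, hγ'y⟩

theorem augmentation_isomorphism_general (σ τ α : PermPt)
    (hα : ¬ Decomp α.2) (h : ¬ ple (pdsP α σ) τ) :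
    (∀ π : PermPt, ple σ π → ple π τ →
      ple (pdsP α σ) (pdsP α π) ∧ ple (pdsP α π) (pdsP α τ)) ∧
    (∀ ρ : PermPt, ple (pdsP α σ) ρ → ple ρ (pdsP α τ) →
      ∃ π : PermPt, ple σ π ∧ ple π τ ∧ ρ = pdsP α π) ∧
    (∀ π π' : PermPt, ple σ π → ple π τ → ple σ π' → ple π' τ →
      (ple π π' ↔ ple (pdsP α π) (pdsP α π'))) := by
  have hmono : ∀ {x y}, ple x y → ple (pdsP α x) (pdsP α y) := pdsP_ple_pdsP (ple_refl α)
  refine ⟨fun π hσπ hπτ => ⟨hmono hσπ, hmono hπτ⟩, fun ρ hσρ hρτ => ?_,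
    fun π π' hσπ _ _ hπ'τ => ⟨hmono, fun hππ' => ?_⟩⟩
  · obtain ⟨β, γ, rfl, hβα, hγτ⟩ := exists_eq_pdsP_of_ple_pdsP hρτ
    rcases eq_and_ple_or_pdsP_ple_of_pdsP_ple_pdsP hα hβα hσρ with ⟨rfl, hσγ⟩ | hσγ
    · exact ⟨γ, hσγ, hγτ, rfl⟩
    · exact absurd (ple_trans hσγ hγτ) h
  · rcases eq_and_ple_or_pdsP_ple_of_pdsP_ple_pdsP hα (ple_refl α) hππ' with ⟨-, hππ'⟩ | hπ'
    · exact hππ'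
    · exact absurd (ple_trans (ple_trans (hmono hσπ) hπ') hπ'τ) h

/-- If `α` is indecomposable and `α ⊕ σ ≰ τ`, then `π ↦ α ⊕ π` is an order
isomorphism from `[σ,τ]` onto `[α⊕σ, α⊕τ]`: it maps into the target interval,
is surjective onto it, and preserves and reflects the order. -/
theorem augmentation_isomorphism (σ τ α : PermPt) (hστ : ple σ τ)
    (hα : ¬ Decomp α.2) (h : ¬ ple (pdsP α σ) τ) :
    (∀ π : PermPt, ple σ π → ple π τ →
      ple (pdsP α σ) (pdsP α π) ∧ ple (pdsP α π) (pdsP α τ)) ∧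
    (∀ ρ : PermPt, ple (pdsP α σ) ρ → ple ρ (pdsP α τ) →
      ∃ π : PermPt, ple σ π ∧ ple π τ ∧ ρ = pdsP α π) ∧
    (∀ π π' : PermPt, ple σ π → ple π τ → ple σ π' → ple π' τ →
      (ple π π' ↔ ple (pdsP α π) (pdsP α π'))) :=
  augmentation_isomorphism_general σ τ α hα h
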